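/- arXiv:1406.6242 — 3 statements merged into one kernel-verified Lean document; each statement's English description precedes it below -/
import Mathlib

section
/- For every real number t, F(t) ≤ (|t|^N/N) e^{|t|^{N'}} − |t|^{N+N'}/N². (Inequality (4.2) of the paper.) -/
open MeasureTheory Real

/-- `N' = N/(N-1)`. -/
noncomputable def Np (N : ℕ) : ℝ := (N : ℝ) / ((N : ℝ) - 1)

/-- `F(t) = ∫₀^{|t|} s^{N-1} e^{s^{N'}} ds`. -/
noncomputable def Fcrit (N : ℕ) (t : ℝ) : ℝ :=
  ∫ s in (0:ℝ)..|t|, s ^ ((N : ℝ) - 1) * Real.exp (s ^ Np N)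

theorem stmt_2 (N : ℕ) (hN : 2 ≤ N) (t : ℝ) :
    Fcrit N t ≤ |t| ^ (N : ℝ) / N * Real.exp (|t| ^ Np N)
      - |t| ^ ((N : ℝ) + Np N) / (N : ℝ) ^ 2 := by
  have hN2 : (2:ℝ) ≤ (N:ℝ) := by exact_mod_cast hN
  have hN0 : (0:ℝ) < (N:ℝ) := by linarith
  have hN1 : (0:ℝ) < (N:ℝ) - 1 := by linarith
  set n : ℝ := (N:ℝ) with hn
  set m : ℝ := Np N with hm
  have hm1 : 1 ≤ m := by
    rw [hm, Np, le_div_iff₀ hN1]; linarith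
  have hmn : m * (n - 1) = n := by
    rw [hm, Np, ← hn]; field_simp
  set p : ℝ := n + m with hp
  have hp2 : 2 ≤ p := by linarith
  have hpmn : p = m * n := by linear_combination -hmn
  set r := |t| with hr
  have hr0 : 0 ≤ r := abs_nonneg t
  -- derivative of the RHS function
  set d : ℝ → ℝ := fun s =>
    (n * s ^ (n - 1) * Real.exp (s ^ m) + s ^ n * (Real.exp (s ^ m) * (m * s ^ (m - 1)))) / n
      - p * s ^ (p - 1) / n ^ 2 with hd
  set g : ℝ → ℝ := fun s => s ^ n * Real.exp (s ^ m) / n - s ^ p / n ^ 2 with hg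
  have hderiv : ∀ s ∈ Set.uIcc (0:ℝ) r, HasDerivAt g (d s) s := by
    intro s _
    have h1 : HasDerivAt (fun s : ℝ => s ^ n) (n * s ^ (n - 1)) s :=
      Real.hasDerivAt_rpow_const (Or.inr (by linarith))
    have h2 : HasDerivAt (fun s : ℝ => s ^ m) (m * s ^ (m - 1)) s :=
      Real.hasDerivAt_rpow_const (Or.inr hm1)
    have h3 := h2.exp
    have h6 : HasDerivAt (fun s : ℝ => s ^ p) (p * s ^ (p - 1)) s :=
      Real.hasDerivAt_rpow_const (Or.inr (by linarith))
    exact ((h1.mul h3).div_const n).sub (h6.div_const (n ^ 2))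
  have cont_rpow : ∀ q : ℝ, 0 ≤ q → Continuous (fun s : ℝ => s ^ q) := fun q hq =>
    continuous_id.rpow_const (fun x => Or.inr hq)
  have contf : Continuous (fun s : ℝ => s ^ (n - 1) * Real.exp (s ^ m)) :=
    (cont_rpow (n - 1) (by linarith)).mul
      (Real.continuous_exp.comp (cont_rpow m (by linarith)))
  have contd : Continuous d := by
    apply Continuous.sub
    · apply Continuous.div_const
      apply Continuous.add
      · exact (continuous_const.mul (cont_rpow (n-1) (by linarith))).mul
          (Real.continuous_exp.comp (cont_rpow m (by linarith)))
      · exact (cont_rpow n (by linarith)).mul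
          ((Real.continuous_exp.comp (cont_rpow m (by linarith))).mul
            (continuous_const.mul (cont_rpow (m-1) (by linarith))))
    · exact (continuous_const.mul (cont_rpow (p-1) (by linarith))).div_const _
  have hftc : ∫ s in (0:ℝ)..r, d s = g r - g 0 :=
    intervalIntegral.integral_eq_sub_of_hasDerivAt hderiv
      (contd.intervalIntegrable 0 r)
  have hle : ∀ s ∈ Set.Icc (0:ℝ) r, s ^ (n - 1) * Real.exp (s ^ m) ≤ d s := by
    intro s hs
    rcases eq_or_lt_of_le hs.1 with hs0 | hs0
    · subst hs0
      simp only [hd]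
      rw [Real.zero_rpow (by linarith : n - 1 ≠ 0), Real.zero_rpow (by linarith : n ≠ 0),
        Real.zero_rpow (by linarith : p - 1 ≠ 0)]
      norm_num
    · have hE1 : 1 ≤ Real.exp (s ^ m) :=
        Real.one_le_exp (Real.rpow_nonneg (le_of_lt hs0) m)
      have hkey : s ^ n * s ^ (m - 1) = s ^ (p - 1) := by
        rw [← Real.rpow_add hs0, hp]; ring_nf
      have hsp : 0 ≤ s ^ (p - 1) := Real.rpow_nonneg (le_of_lt hs0) _
      simp only [hd]
      rw [← hkey, hpmn]
      have hn0 : n ≠ 0 := by linarith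
      have hdiff : (n * s ^ (n - 1) * Real.exp (s ^ m)
            + s ^ n * (Real.exp (s ^ m) * (m * s ^ (m - 1)))) / n
            - m * n * (s ^ n * s ^ (m - 1)) / n ^ 2
            - s ^ (n - 1) * Real.exp (s ^ m)
          = m / n * (s ^ n * s ^ (m - 1)) * (Real.exp (s ^ m) - 1) := by
        field_simp; ring
      have hnn : 0 ≤ m / n * (s ^ n * s ^ (m - 1)) * (Real.exp (s ^ m) - 1) := by
        have h1 : 0 ≤ s ^ n * s ^ (m - 1) := by positivity
        have h2 : 0 ≤ m / n := by positivity
        exact mul_nonneg (mul_nonneg h2 h1) (by linarith)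
      linarith
  have hmono : Fcrit N t ≤ ∫ s in (0:ℝ)..r, d s := by
    rw [Fcrit]
    exact intervalIntegral.integral_mono_on hr0
      (contf.intervalIntegrable 0 r) (contd.intervalIntegrable 0 r) hle
  have hg0 : g 0 = 0 := by
    simp only [hg]
    rw [Real.zero_rpow (by linarith : n ≠ 0), Real.zero_rpow (by linarith : p ≠ 0)]
    norm_num
  calc Fcrit N t ≤ ∫ s in (0:ℝ)..r, d s := hmono
    _ = g r - g 0 := hftc
    _ = r ^ n / n * Real.exp (r ^ m) - r ^ p / n ^ 2 := by rw [hg0]; simp only [hg]; ring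
end

section
/- Let r > 0, let j ≥ 2 be an integer, and let t ≥ 0 satisfy t^{N'} ≥ α_N. Then ∫_{ℝ^N} v_j(x/r)^N e^{t^{N'} v_j(x/r)^{N'}} dx ≥ (r^N / N) (log j)^{N−1}, where the integral is a Lebesgue integral with values in [0,∞]. (The lower bound ∫_{B_{r_m}(0)} ṽ_j^N e^{t_j^{N'} ṽ_j^{N'}} dx ≥ (r_m^N/N)(log j)^{N−1} from the proof of Theorem 1.1.) -/
open MeasureTheory Real

/-- The surface measure `ω_{N-1}` of the unit sphere in `ℝ^N`, characterized by the fact that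
the Lebesgue measure of the ball of radius `r` equals `ω_{N-1} r^N / N`. -/
noncomputable def omegaS (N : ℕ) : ℝ :=
  N * (volume (Metric.ball (0 : EuclideanSpace ℝ (Fin N)) 1)).toReal

/-- `α_N = N ω_{N-1}^{1/(N-1)}`. -/
noncomputable def alphaN (N : ℕ) : ℝ := N * omegaS N ^ (1 / ((N : ℝ) - 1))

/-- The Moser function `v_j`. -/
noncomputable def moser (N j : ℕ) (x : EuclideanSpace ℝ (Fin N)) : ℝ :=
  if ‖x‖ ≤ 1 / (j : ℝ) then omegaS N ^ (-(1 : ℝ) / N) * Real.log j ^ (((N : ℝ) - 1) / N)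
  else if ‖x‖ ≤ 1 then omegaS N ^ (-(1 : ℝ) / N) * Real.log j ^ (-(1 : ℝ) / N) * Real.log (1 / ‖x‖)
  else 0

theorem stmt_12 (N j : ℕ) (hN : 2 ≤ N) (hj : 2 ≤ j) (r t : ℝ) (hr : 0 < r) (ht : 0 ≤ t)
    (hta : alphaN N ≤ t ^ Np N) :
    ∫⁻ x, ENNReal.ofReal
        (moser N j (r⁻¹ • x) ^ N * Real.exp (t ^ Np N * moser N j (r⁻¹ • x) ^ Np N))
      ≥ ENNReal.ofReal (r ^ N / N * Real.log j ^ (N - 1)) := by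
  haveI : Nontrivial (EuclideanSpace ℝ (Fin N)) :=
    Module.nontrivial_of_finrank_pos (R := ℝ) (by rw [finrank_euclideanSpace_fin]; omega)
  set ω := omegaS N with hωdef
  have hNpos : (0:ℝ) < N := by positivity
  have hjpos : (0:ℝ) < j := by positivity
  have hN1 : (1:ℝ) ≤ (N:ℝ) - 1 := by
    have : (2:ℝ) ≤ N := by exact_mod_cast hN
    linarith
  have hvol : (0:ℝ) < (volume (Metric.ball (0 : EuclideanSpace ℝ (Fin N)) 1)).toReal := by
    have h1 : 0 < volume (Metric.ball (0 : EuclideanSpace ℝ (Fin N)) 1) :=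
      Metric.measure_ball_pos _ _ one_pos
    have h2 : volume (Metric.ball (0 : EuclideanSpace ℝ (Fin N)) 1) < ⊤ :=
      measure_ball_lt_top
    exact ENNReal.toReal_pos h1.ne' h2.ne
  have hω : 0 < ω := by
    rw [hωdef, omegaS]; positivity
  have hL : 0 < Real.log j := Real.log_pos (by exact_mod_cast hj)
  set v : ℝ := ω ^ (-(1 : ℝ) / N) * Real.log j ^ (((N : ℝ) - 1) / N) with hvdef
  have hv : 0 ≤ v := by positivity
  -- value of v^N
  have hvN : v ^ N = ω⁻¹ * Real.log j ^ (N - 1) := by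
    have key : v ^ (N:ℝ) = ω⁻¹ * Real.log j ^ (N - 1) := by
      rw [hvdef, Real.mul_rpow (by positivity) (by positivity),
        ← Real.rpow_mul hω.le, ← Real.rpow_mul hL.le]
      have e1 : (-(1:ℝ)/N) * N = -1 := by field_simp
      have e2 : (((N:ℝ)-1)/N) * N = ((N-1 : ℕ) : ℝ) := by
        rw [Nat.cast_sub (by omega)]
        push_cast
        field_simp
      rw [e1, e2, Real.rpow_neg_one, Real.rpow_natCast]
    rw [← key, Real.rpow_natCast]
  -- value of v^Np
  have hvNp : v ^ Np N = ω ^ (-(1:ℝ) / ((N:ℝ)-1)) * Real.log j := by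
    rw [hvdef, Real.mul_rpow (by positivity) (by positivity),
      ← Real.rpow_mul hω.le, ← Real.rpow_mul hL.le, Np]
    have e1 : (-(1:ℝ)/N) * ((N:ℝ)/((N:ℝ)-1)) = -1 / ((N:ℝ)-1) := by
      field_simp
    have e2 : (((N:ℝ)-1)/N) * ((N:ℝ)/((N:ℝ)-1)) = 1 := by
      field_simp
    rw [e1, e2, Real.rpow_one]
  -- exponent lower bound
  have hexp : (N:ℝ) * Real.log j ≤ t ^ Np N * v ^ Np N := by
    have hvNp' : 0 < v ^ Np N := by
      rw [hvNp]; positivity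
    calc (N:ℝ) * Real.log j
        = alphaN N * (ω ^ (-(1:ℝ)/((N:ℝ)-1)) * Real.log j) := by
          rw [alphaN, ← hωdef]
          have h1 : ω ^ ((1:ℝ)/((N:ℝ)-1)) * ω ^ (-(1:ℝ)/((N:ℝ)-1)) = 1 := by
            rw [← Real.rpow_add hω,
              show (1:ℝ)/((N:ℝ)-1) + -(1:ℝ)/((N:ℝ)-1) = 0 from by ring, Real.rpow_zero]
          linear_combination (-((N:ℝ) * Real.log j)) * h1
      _ = alphaN N * v ^ Np N := by rw [hvNp]
      _ ≤ t ^ Np N * v ^ Np N := by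
          apply mul_le_mul_of_nonneg_right hta hvNp'.le
  have hexpval : ((j:ℝ) ^ N) ≤ Real.exp (t ^ Np N * v ^ Np N) := by
    calc ((j:ℝ) ^ N) = Real.exp ((N:ℝ) * Real.log j) := by
          rw [mul_comm, Real.exp_mul, Real.exp_log hjpos, Real.rpow_natCast]
      _ ≤ _ := Real.exp_le_exp.mpr hexp
  -- the set
  set B := Metric.ball (0 : EuclideanSpace ℝ (Fin N)) (r / j) with hBdef
  have hmem : ∀ x ∈ B, moser N j (r⁻¹ • x) = v := by
    intro x hx
    rw [Metric.mem_ball, dist_zero_right] at hx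
    have : ‖r⁻¹ • x‖ ≤ 1 / j := by
      rw [norm_smul, norm_inv, Real.norm_of_nonneg hr.le]
      have h2 : r⁻¹ * ‖x‖ ≤ r⁻¹ * (r / j) :=
        mul_le_mul_of_nonneg_left hx.le (by positivity)
      refine h2.trans (le_of_eq ?_)
      field_simp
    rw [moser, if_pos this, ← hωdef]
  set C : ℝ := v ^ N * Real.exp (t ^ Np N * v ^ Np N) with hCdef
  have hstep : ∫⁻ x in B, ENNReal.ofReal
        (moser N j (r⁻¹ • x) ^ N * Real.exp (t ^ Np N * moser N j (r⁻¹ • x) ^ Np N))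
      = ENNReal.ofReal C * volume B := by
    rw [setLIntegral_congr_fun measurableSet_ball
      (fun x hx => by rw [hmem x hx]), setLIntegral_const]
  have hvolB : volume B = ENNReal.ofReal ((r/j) ^ N * (ω / N)) := by
    rw [hBdef, Measure.addHaar_ball _ _ (by positivity : (0:ℝ) ≤ r / j),
      finrank_euclideanSpace_fin]
    have : volume (Metric.ball (0 : EuclideanSpace ℝ (Fin N)) 1)
        = ENNReal.ofReal (ω / N) := by
      rw [hωdef, omegaS]
      rw [show ((N:ℝ) * (volume (Metric.ball (0 : EuclideanSpace ℝ (Fin N)) 1)).toReal) / N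
          = (volume (Metric.ball (0 : EuclideanSpace ℝ (Fin N)) 1)).toReal from by
        field_simp]
      exact (ENNReal.ofReal_toReal measure_ball_lt_top.ne).symm
    rw [this, ← ENNReal.ofReal_mul (by positivity)]
  calc ENNReal.ofReal (r ^ N / N * Real.log j ^ (N - 1))
      ≤ ENNReal.ofReal (C * ((r/j) ^ N * (ω / N))) := by
        apply ENNReal.ofReal_le_ofReal
        rw [hCdef, hvN]
        have : ω⁻¹ * Real.log j ^ (N-1) * ((j:ℝ)^N) * ((r/j)^N * (ω/N))
            = r ^ N / N * Real.log j ^ (N - 1) := by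
          rw [div_pow]
          field_simp
        calc r ^ N / N * Real.log j ^ (N - 1)
            = ω⁻¹ * Real.log j ^ (N-1) * ((j:ℝ)^N) * ((r/j)^N * (ω/N)) := this.symm
          _ ≤ ω⁻¹ * Real.log j ^ (N-1) * Real.exp (t ^ Np N * v ^ Np N) * ((r/j)^N * (ω/N)) := by
              apply mul_le_mul_of_nonneg_right _ (by positivity)
              apply mul_le_mul_of_nonneg_left hexpval (by positivity)
          _ = _ := by ring
    _ = ENNReal.ofReal C * volume B := by
        rw [hvolB, ← ENNReal.ofReal_mul (by positivity)]
    _ = ∫⁻ x in B, ENNReal.ofReal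
        (moser N j (r⁻¹ • x) ^ N * Real.exp (t ^ Np N * moser N j (r⁻¹ • x) ^ Np N)) := hstep.symm
    _ ≤ _ := setLIntegral_le_lintegral _ _
end

section
/- Let M > 0 and L > 0. There exists a constant C > 0, depending only on N, M and L, such that for every integer m ≥ 1 and every Lipschitz function u : ℝ^N → ℝ with |u(x)| ≤ M for all x, |∇u(x)| ≤ L for almost every x, and ∫_{ℝ^N} |∇u|^N dx < ∞, one has |∫_{ℝ^N} |∇(η_m u)(x)|^N dx − ∫_{ℝ^N} |∇u(x)|^N dx| ≤ C / m^{N−1}. (Estimate (3.3): ∫|∇(η_m u)|^N dx = ∫|∇u|^N dx + O(1/m^{N−1}) uniformly over C¹-bounded families.) -/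
open MeasureTheory Real

/-- The cutoff function `η_m`. -/
noncomputable def eta (N m : ℕ) (x : EuclideanSpace ℝ (Fin N)) : ℝ :=
  if ‖x‖ ≤ 1 / (2 * (m : ℝ) ^ (m + 1)) then 0
  else if ‖x‖ ≤ 1 / (m : ℝ) ^ (m + 1) then
    2 * (m : ℝ) ^ m * (‖x‖ - 1 / (2 * (m : ℝ) ^ (m + 1)))
  else if ‖x‖ ≤ 1 / (m : ℝ) then ((m : ℝ) * ‖x‖) ^ ((1 : ℝ) / m)
  else 1

namespace EtaAux

open Metric Set

noncomputable section

abbrev Eu (N : ℕ) := EuclideanSpace ℝ (Fin N)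

def rA (m : ℕ) : ℝ := 1 / (2 * (m : ℝ) ^ (m + 1))
def rB (m : ℕ) : ℝ := 1 / (m : ℝ) ^ (m + 1)
def rC (m : ℕ) : ℝ := 1 / (m : ℝ)

variable {N m : ℕ}

lemma hm1 (hm : 1 ≤ m) : (1 : ℝ) ≤ (m : ℝ) := by exact_mod_cast hm

lemma hmpos (hm : 1 ≤ m) : (0 : ℝ) < (m : ℝ) := lt_of_lt_of_le one_pos (hm1 hm)

lemma hpow_pos (hm : 1 ≤ m) (k : ℕ) : (0 : ℝ) < (m : ℝ) ^ k := pow_pos (hmpos hm) k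

lemma hpow_ge (hm : 1 ≤ m) : (m : ℝ) ≤ (m : ℝ) ^ (m + 1) := by
  calc (m : ℝ) = (m : ℝ) ^ 1 := (pow_one _).symm
    _ ≤ (m : ℝ) ^ (m + 1) := pow_le_pow_right₀ (hm1 hm) (by omega)

lemma rA_pos (hm : 1 ≤ m) : 0 < rA m :=
  div_pos one_pos (mul_pos two_pos (hpow_pos hm _))

lemma rB_pos (hm : 1 ≤ m) : 0 < rB m := div_pos one_pos (hpow_pos hm _)

lemma rC_pos (hm : 1 ≤ m) : 0 < rC m := div_pos one_pos (hmpos hm)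

lemma rA_lt_rB (hm : 1 ≤ m) : rA m < rB m := by
  have h := hpow_pos hm (m + 1)
  rw [rA, rB, div_lt_div_iff₀ (by linarith) h]
  nlinarith

lemma rB_le_rC (hm : 1 ≤ m) : rB m ≤ rC m := by
  rw [rB, rC]
  exact one_div_le_one_div_of_le (hmpos hm) (hpow_ge hm)

lemma rA_lt_rC (hm : 1 ≤ m) : rA m < rC m := lt_of_lt_of_le (rA_lt_rB hm) (rB_le_rC hm)

lemma eta_of_le {x : Eu N} (h : ‖x‖ ≤ rA m) : eta N m x = 0 := by
  rw [rA] at h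
  rw [eta, if_pos h]

lemma eta_lin {x : Eu N} (h1 : rA m < ‖x‖) (h2 : ‖x‖ ≤ rB m) :
    eta N m x = 2 * (m : ℝ) ^ m * (‖x‖ - rA m) := by
  rw [rA] at h1 ⊢
  rw [rB] at h2
  rw [eta, if_neg (not_le.2 h1), if_pos h2]

lemma eta_rpow (hm : 1 ≤ m) {x : Eu N} (h2 : rB m < ‖x‖) (h3 : ‖x‖ ≤ rC m) :
    eta N m x = ((m : ℝ) * ‖x‖) ^ ((1 : ℝ) / m) := by
  have h1 : rA m < ‖x‖ := lt_trans (rA_lt_rB hm) h2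
  rw [rA] at h1; rw [rB] at h2; rw [rC] at h3
  rw [eta, if_neg (not_le.2 h1), if_neg (not_le.2 h2), if_pos h3]

lemma eta_one (hm : 1 ≤ m) {x : Eu N} (h : rC m < ‖x‖) : eta N m x = 1 := by
  have h1 : rA m < ‖x‖ := lt_trans (rA_lt_rC hm) h
  have h2 : rB m < ‖x‖ := lt_of_le_of_lt (rB_le_rC hm) h
  rw [rA] at h1; rw [rB] at h2; rw [rC] at h
  rw [eta, if_neg (not_le.2 h1), if_neg (not_le.2 h2), if_neg (not_le.2 h)]

lemma eta_nonneg (hm : 1 ≤ m) (x : Eu N) : 0 ≤ eta N m x := by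
  rw [eta]
  split_ifs with h1 h2 h3
  · exact le_refl 0
  · have : 1 / (2 * (m : ℝ) ^ (m + 1)) < ‖x‖ := not_le.1 h1
    have hnn : (0 : ℝ) ≤ 2 * (m : ℝ) ^ m := by positivity
    nlinarith
  · exact Real.rpow_nonneg (by positivity) _
  · exact zero_le_one

lemma lin_piece_eq (hm : 1 ≤ m) :
    2 * (m : ℝ) ^ m * (rB m - rA m) = 1 / m := by
  have hmne : (m : ℝ) ≠ 0 := (hmpos hm).ne'
  rw [rA, rB, pow_succ]
  field_simp
  ring

lemma eta_le_one (hm : 1 ≤ m) (x : Eu N) : eta N m x ≤ 1 := by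
  rw [eta]
  split_ifs with h1 h2 h3
  · exact zero_le_one
  · have key := lin_piece_eq (m := m) hm
    rw [rA, rB] at key
    have hnn : (0 : ℝ) ≤ 2 * (m : ℝ) ^ m := by positivity
    have h2' : ‖x‖ - 1 / (2 * (m : ℝ) ^ (m + 1))
        ≤ 1 / (m : ℝ) ^ (m + 1) - 1 / (2 * (m : ℝ) ^ (m + 1)) := by linarith
    have hm' : 1 / (m : ℝ) ≤ 1 := by
      rw [div_le_one (hmpos hm)]; exact hm1 hm
    nlinarith
  · apply Real.rpow_le_one (by positivity) _ (by positivity)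
    rw [mul_comm, ← le_div_iff₀ (hmpos hm)]
    exact h3
  · exact le_refl 1

lemma norm_diffAt {x : Eu N} (hx : x ≠ 0) :
    DifferentiableAt ℝ (fun y : Eu N => ‖y‖) x :=
  (contDiffAt_norm ℝ (n := 1) hx).differentiableAt one_ne_zero

lemma norm_fderiv_norm_le (x : Eu N) : ‖fderiv ℝ (fun y : Eu N => ‖y‖) x‖ ≤ 1 := by
  have h := norm_fderiv_le_of_lipschitz ℝ (f := fun y : Eu N => ‖y‖) (x₀ := x)
    lipschitzWith_one_norm
  simpa using h

lemma eta_hasFDerivAt_lin (hm : 1 ≤ m) {x : Eu N} (h1 : rA m < ‖x‖) (h2 : ‖x‖ < rB m) :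
    HasFDerivAt (eta N m) ((2 * (m : ℝ) ^ m) • fderiv ℝ (fun y : Eu N => ‖y‖) x) x := by
  have hx : x ≠ 0 := by
    intro h
    rw [h, norm_zero] at h1
    exact absurd h1 (not_lt.2 (rA_pos hm).le)
  have hn := (norm_diffAt hx).hasFDerivAt
  have hg := (hn.sub_const (rA m)).const_mul (2 * (m : ℝ) ^ m)
  refine hg.congr_of_eventuallyEq ?_
  have hopen : IsOpen {y : Eu N | rA m < ‖y‖ ∧ ‖y‖ < rB m} :=
    (isOpen_lt continuous_const continuous_norm).inter
      (isOpen_lt continuous_norm continuous_const)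
  filter_upwards [hopen.mem_nhds ⟨h1, h2⟩] with y hy
  exact eta_lin hy.1 hy.2.le

lemma eta_hasFDerivAt_rpow (hm : 1 ≤ m) {x : Eu N} (h2 : rB m < ‖x‖) (h3 : ‖x‖ < rC m) :
    HasFDerivAt (eta N m)
      (((1 : ℝ) / m * ((m : ℝ) * ‖x‖) ^ ((1 : ℝ) / m - 1) * m) •
        fderiv ℝ (fun y : Eu N => ‖y‖) x) x := by
  have hxpos : 0 < ‖x‖ := lt_trans (rB_pos hm) h2
  have hx : x ≠ 0 := norm_pos_iff.1 hxpos
  have hn := (norm_diffAt hx).hasFDerivAt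
  have hmx : 0 < (m : ℝ) * ‖x‖ := mul_pos (hmpos hm) hxpos
  have hinner : HasDerivAt (fun t : ℝ => (m : ℝ) * t) (m : ℝ) ‖x‖ := by
    simpa using (hasDerivAt_id (‖x‖)).const_mul (m : ℝ)
  have houter := Real.hasDerivAt_rpow_const (x := (m : ℝ) * ‖x‖) (p := (1 : ℝ) / m)
    (Or.inl hmx.ne')
  have hcomp := houter.comp ‖x‖ hinner
  have hF := hcomp.comp_hasFDerivAt x hn
  refine hF.congr_of_eventuallyEq ?_
  have hopen : IsOpen {y : Eu N | rB m < ‖y‖ ∧ ‖y‖ < rC m} :=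
    (isOpen_lt continuous_const continuous_norm).inter
      (isOpen_lt continuous_norm continuous_const)
  filter_upwards [hopen.mem_nhds ⟨h2, h3⟩] with y hy
  show eta N m y = ((fun s : ℝ => s ^ ((1 : ℝ) / m)) ∘ (fun t : ℝ => (m : ℝ) * t)) ‖y‖
  simp only [Function.comp_apply]
  exact eta_rpow hm hy.1 hy.2.le

lemma eta_fderiv_bound_lin (hm : 1 ≤ m) {x : Eu N} (h1 : rA m < ‖x‖) (h2 : ‖x‖ < rB m) :
    DifferentiableAt ℝ (eta N m) x ∧ ‖fderiv ℝ (eta N m) x‖ ≤ 2 * (m : ℝ) ^ m := by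
  have hF := eta_hasFDerivAt_lin hm h1 h2
  refine ⟨hF.differentiableAt, ?_⟩
  rw [hF.fderiv, norm_smul, Real.norm_eq_abs, abs_of_nonneg (by positivity)]
  calc 2 * (m : ℝ) ^ m * ‖fderiv ℝ (fun y : Eu N => ‖y‖) x‖
      ≤ 2 * (m : ℝ) ^ m * 1 :=
        mul_le_mul_of_nonneg_left (norm_fderiv_norm_le x) (by positivity)
    _ = 2 * (m : ℝ) ^ m := mul_one _

lemma eta_fderiv_bound_rpow (hm : 1 ≤ m) {x : Eu N} (h2 : rB m < ‖x‖) (h3 : ‖x‖ < rC m) :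
    DifferentiableAt ℝ (eta N m) x ∧
      ‖fderiv ℝ (eta N m) x‖ ≤ ((m : ℝ) * ‖x‖) ^ ((1 : ℝ) / m - 1) := by
  have hF := eta_hasFDerivAt_rpow hm h2 h3
  have hxpos : 0 < ‖x‖ := lt_trans (rB_pos hm) h2
  have hmx : (0 : ℝ) ≤ (m : ℝ) * ‖x‖ := by positivity
  have hcval : (1 : ℝ) / m * ((m : ℝ) * ‖x‖) ^ ((1 : ℝ) / m - 1) * m
      = ((m : ℝ) * ‖x‖) ^ ((1 : ℝ) / m - 1) := by
    have : (m : ℝ) ≠ 0 := (hmpos hm).ne'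
    field_simp
  refine ⟨hF.differentiableAt, ?_⟩
  rw [hF.fderiv, norm_smul, Real.norm_eq_abs, hcval,
    abs_of_nonneg (Real.rpow_nonneg hmx _)]
  calc ((m : ℝ) * ‖x‖) ^ ((1 : ℝ) / m - 1) * ‖fderiv ℝ (fun y : Eu N => ‖y‖) x‖
      ≤ ((m : ℝ) * ‖x‖) ^ ((1 : ℝ) / m - 1) * 1 :=
        mul_le_mul_of_nonneg_left (norm_fderiv_norm_le x) (Real.rpow_nonneg hmx _)
    _ = ((m : ℝ) * ‖x‖) ^ ((1 : ℝ) / m - 1) := mul_one _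

lemma rpow_slope_le (hm : 1 ≤ m) {r : ℝ} (h : rB m < r) :
    ((m : ℝ) * r) ^ ((1 : ℝ) / m - 1) ≤ (m : ℝ) ^ m := by
  have hmr : (0 : ℝ) < (m : ℝ) * rB m := mul_pos (hmpos hm) (rB_pos hm)
  have hle : (m : ℝ) * rB m ≤ (m : ℝ) * r :=
    mul_le_mul_of_nonneg_left h.le (hmpos hm).le
  have hexp : (1 : ℝ) / m - 1 ≤ 0 := by
    have : (1 : ℝ) / m ≤ 1 := by rw [div_le_one (hmpos hm)]; exact hm1 hm
    linarith
  have hbase : (m : ℝ) * rB m = ((m : ℝ) ^ m)⁻¹ := by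
    have : (m : ℝ) ≠ 0 := (hmpos hm).ne'
    rw [rB, pow_succ]
    field_simp
  have h1m : (1 : ℝ) ≤ (m : ℝ) ^ m := one_le_pow₀ (hm1 hm)
  calc ((m : ℝ) * r) ^ ((1 : ℝ) / m - 1)
      ≤ ((m : ℝ) * rB m) ^ ((1 : ℝ) / m - 1) :=
        Real.rpow_le_rpow_of_nonpos hmr hle hexp
    _ = (((m : ℝ) ^ m)⁻¹) ^ ((1 : ℝ) / m - 1) := by rw [hbase]
    _ = ((m : ℝ) ^ m) ^ (1 - (1 : ℝ) / m) := by
        rw [Real.inv_rpow (by positivity), ← Real.rpow_neg (by positivity)]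
        ring_nf
    _ ≤ ((m : ℝ) ^ m) ^ (1 : ℝ) := by
        apply Real.rpow_le_rpow_of_exponent_le h1m
        have : (0 : ℝ) ≤ 1 / m := by positivity
        linarith
    _ = (m : ℝ) ^ m := Real.rpow_one _

lemma fderiv_mul_bound {M b : ℝ} (hm : 1 ≤ m) {u : Eu N → ℝ} {x : Eu N}
    (hu : DifferentiableAt ℝ u x) (hMu : ∀ y, |u y| ≤ M)
    (heta : DifferentiableAt ℝ (eta N m) x) (hb : ‖fderiv ℝ (eta N m) x‖ ≤ b) :
    ‖fderiv ℝ (fun y => eta N m y * u y) x‖ ≤ M * b + ‖fderiv ℝ u x‖ := by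
  rw [fderiv_fun_mul heta hu]
  have h0M : 0 ≤ M := le_trans (abs_nonneg _) (hMu x)
  have h0b : 0 ≤ b := le_trans (norm_nonneg _) hb
  calc ‖eta N m x • fderiv ℝ u x + u x • fderiv ℝ (eta N m) x‖
      ≤ ‖eta N m x • fderiv ℝ u x‖ + ‖u x • fderiv ℝ (eta N m) x‖ := norm_add_le _ _
    _ = |eta N m x| * ‖fderiv ℝ u x‖ + |u x| * ‖fderiv ℝ (eta N m) x‖ := by
        rw [norm_smul, norm_smul, Real.norm_eq_abs, Real.norm_eq_abs]
    _ ≤ 1 * ‖fderiv ℝ u x‖ + M * b := by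
        gcongr
        · rw [abs_of_nonneg (eta_nonneg hm x)]; exact eta_le_one hm x
        · exact hMu x
    _ = M * b + ‖fderiv ℝ u x‖ := by ring

lemma fderiv_outer (hm : 1 ≤ m) {u : Eu N → ℝ} {x : Eu N} (h : rC m < ‖x‖) :
    fderiv ℝ (fun y => eta N m y * u y) x = fderiv ℝ u x := by
  apply Filter.EventuallyEq.fderiv_eq
  have hopen : IsOpen {y : Eu N | rC m < ‖y‖} := isOpen_lt continuous_const continuous_norm
  filter_upwards [hopen.mem_nhds h] with y hy
  rw [eta_one hm hy, one_mul]

lemma fderiv_inner (hm : 1 ≤ m) {u : Eu N → ℝ} {x : Eu N} (h : ‖x‖ < rA m) :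
    fderiv ℝ (fun y => eta N m y * u y) x = 0 := by
  have heq : fderiv ℝ (fun y => eta N m y * u y) x
      = fderiv ℝ (fun _ : Eu N => (0 : ℝ)) x := by
    apply Filter.EventuallyEq.fderiv_eq
    have hopen : IsOpen {y : Eu N | ‖y‖ < rA m} := isOpen_lt continuous_norm continuous_const
    filter_upwards [hopen.mem_nhds h] with y hy
    rw [eta_of_le hy.le, zero_mul]
  rw [heq, fderiv_fun_const]
  rfl

lemma pow_add_le_aux (a b : ℝ) (ha : 0 ≤ a) (hb : 0 ≤ b) (n : ℕ) :
    (a + b) ^ n ≤ 2 ^ n * (a ^ n + b ^ n) := by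
  have h1 : a + b ≤ 2 * max a b := by
    rcases le_total a b with h | h
    · rw [max_eq_right h]; linarith
    · rw [max_eq_left h]; linarith
  have h2 : (max a b) ^ n ≤ a ^ n + b ^ n := by
    rcases le_total a b with h | h
    · rw [max_eq_right h]; exact le_add_of_nonneg_left (pow_nonneg ha n)
    · rw [max_eq_left h]; exact le_add_of_nonneg_right (pow_nonneg hb n)
  calc (a + b) ^ n ≤ (2 * max a b) ^ n := pow_le_pow_left₀ (by positivity) h1 n
    _ = 2 ^ n * (max a b) ^ n := mul_pow 2 _ n
    _ ≤ 2 ^ n * (a ^ n + b ^ n) :=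
        mul_le_mul_of_nonneg_left h2 (by positivity)

lemma cb_vol (N : ℕ) {r : ℝ} (hr : 0 ≤ r) :
    (volume (closedBall (0 : Eu N) r)).toReal
      = r ^ N * (volume (ball (0 : Eu N) 1)).toReal := by
  rw [Measure.addHaar_closedBall _ _ hr]
  simp only [finrank_euclideanSpace_fin]
  rw [ENNReal.toReal_mul, ENNReal.toReal_ofReal (by positivity)]


lemma nontrivial_Eu (N : ℕ) (hN : 2 ≤ N) : Nontrivial (Eu N) :=
  Module.nontrivial_of_finrank_pos (R := ℝ)
    (by rw [finrank_euclideanSpace_fin]; omega)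

lemma annulus_J_le (N : ℕ) (hN : 2 ≤ N) (m : ℕ) (hm : 1 ≤ m) :
    ∫ x in (closedBall (0 : Eu N) (rC m) \ closedBall (0 : Eu N) (rB m)),
        (((m : ℝ) * ‖x‖) ^ ((1 : ℝ) / m - 1)) ^ N
      ≤ (volume (ball (0 : Eu N) 1)).toReal * ((m : ℝ) ^ (N - 1))⁻¹ := by
  haveI := nontrivial_Eu N hN
  have hmp := hmpos hm
  have hNne : (N : ℝ) ≠ 0 := Nat.cast_ne_zero.2 (by omega)
  have hNm_pos : (0 : ℝ) < (N : ℝ) / m :=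
    div_pos (by exact_mod_cast (by omega : 0 < N)) hmp
  set f : ℝ → ℝ :=
    Set.indicator (Set.Ioc (rB m) (rC m))
      (fun r => (((m : ℝ) * r) ^ ((1 : ℝ) / m - 1)) ^ N) with hf_def
  have hmem : ∀ x : Eu N,
      (x ∈ closedBall (0 : Eu N) (rC m) \ closedBall (0 : Eu N) (rB m)) ↔
        ‖x‖ ∈ Set.Ioc (rB m) (rC m) := by
    intro x
    simp only [Set.mem_diff, mem_closedBall_zero_iff, Set.mem_Ioc, not_le]
    tauto
  have h1 : ∫ x in (closedBall (0 : Eu N) (rC m) \ closedBall (0 : Eu N) (rB m)),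
      (((m : ℝ) * ‖x‖) ^ ((1 : ℝ) / m - 1)) ^ N = ∫ x : Eu N, f ‖x‖ := by
    rw [← integral_indicator (measurableSet_closedBall.diff measurableSet_closedBall)]
    congr 1
    ext x
    by_cases hx : ‖x‖ ∈ Set.Ioc (rB m) (rC m)
    · rw [Set.indicator_of_mem ((hmem x).2 hx), hf_def, Set.indicator_of_mem hx]
    · rw [Set.indicator_of_notMem (fun hc => hx ((hmem x).1 hc)), hf_def,
        Set.indicator_of_notMem hx]
  rw [h1, integral_fun_norm_addHaar volume f]
  simp only [finrank_euclideanSpace_fin, nsmul_eq_mul, smul_eq_mul]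
  have h2 : ∫ y in Set.Ioi (0 : ℝ), y ^ (N - 1) * f y
      = ∫ y in Set.Ioc (rB m) (rC m),
          y ^ (N - 1) * (((m : ℝ) * y) ^ ((1 : ℝ) / m - 1)) ^ N := by
    have hfun : (fun y : ℝ => y ^ (N - 1) * f y)
        = Set.indicator (Set.Ioc (rB m) (rC m))
            (fun y => y ^ (N - 1) * (((m : ℝ) * y) ^ ((1 : ℝ) / m - 1)) ^ N) := by
      ext y
      by_cases hy : y ∈ Set.Ioc (rB m) (rC m)
      · rw [hf_def, Set.indicator_of_mem hy, Set.indicator_of_mem hy]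
      · rw [hf_def, Set.indicator_of_notMem hy, Set.indicator_of_notMem hy, mul_zero]
    rw [hfun, integral_indicator measurableSet_Ioc,
      Measure.restrict_restrict measurableSet_Ioc,
      Set.inter_eq_left.2 (fun y hy => Set.mem_Ioi.2 (lt_trans (rB_pos hm) hy.1))]
  have h3 : ∫ y in Set.Ioc (rB m) (rC m),
        y ^ (N - 1) * (((m : ℝ) * y) ^ ((1 : ℝ) / m - 1)) ^ N
      = (m : ℝ) ^ (((1 : ℝ) / m - 1) * (N : ℝ)) *
          ∫ y in Set.Ioc (rB m) (rC m), y ^ ((N : ℝ) / m - 1) := by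
    rw [← integral_const_mul]
    apply setIntegral_congr_fun measurableSet_Ioc
    intro y hy
    have hy0 : 0 < y := lt_trans (rB_pos hm) hy.1
    have hmy : (0 : ℝ) ≤ (m : ℝ) * y := by positivity
    have e1 : (((m : ℝ) * y) ^ ((1 : ℝ) / m - 1)) ^ N
        = ((m : ℝ) * y) ^ (((1 : ℝ) / m - 1) * (N : ℝ)) := by
      rw [← Real.rpow_natCast (((m : ℝ) * y) ^ ((1 : ℝ) / m - 1)) N, ← Real.rpow_mul hmy]
    have e2 : ((m : ℝ) * y) ^ (((1 : ℝ) / m - 1) * (N : ℝ))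
        = (m : ℝ) ^ (((1 : ℝ) / m - 1) * (N : ℝ)) * y ^ (((1 : ℝ) / m - 1) * (N : ℝ)) :=
      Real.mul_rpow hmp.le hy0.le
    have e3 : (y : ℝ) ^ (N - 1) = y ^ ((N : ℝ) - 1) := by
      rw [← Real.rpow_natCast y (N - 1)]
      congr 1
      rw [Nat.cast_sub (by omega : 1 ≤ N), Nat.cast_one]
    have e4 : y ^ ((N : ℝ) - 1) * y ^ (((1 : ℝ) / m - 1) * (N : ℝ)) = y ^ ((N : ℝ) / m - 1) := by
      rw [← Real.rpow_add hy0]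
      congr 1
      field_simp
      ring
    calc y ^ (N - 1) * (((m : ℝ) * y) ^ ((1 : ℝ) / m - 1)) ^ N
        = y ^ ((N : ℝ) - 1) * ((m : ℝ) ^ (((1 : ℝ) / m - 1) * (N : ℝ)) *
            y ^ (((1 : ℝ) / m - 1) * (N : ℝ))) := by rw [e1, e2, e3]
      _ = (m : ℝ) ^ (((1 : ℝ) / m - 1) * (N : ℝ)) *
            (y ^ ((N : ℝ) - 1) * y ^ (((1 : ℝ) / m - 1) * (N : ℝ))) := by ring
      _ = (m : ℝ) ^ (((1 : ℝ) / m - 1) * (N : ℝ)) * y ^ ((N : ℝ) / m - 1) := by rw [e4]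
  have h4 : ∫ y in Set.Ioc (rB m) (rC m), y ^ ((N : ℝ) / m - 1)
      = ((rC m) ^ ((N : ℝ) / m) - (rB m) ^ ((N : ℝ) / m)) / ((N : ℝ) / m) := by
    rw [← intervalIntegral.integral_of_le (rB_le_rC hm),
      integral_rpow (Or.inl (by linarith : (-1 : ℝ) < (N : ℝ) / m - 1)), sub_add_cancel]
  have hrC : (rC m) ^ ((N : ℝ) / m) = ((m : ℝ) ^ ((N : ℝ) / m))⁻¹ := by
    rw [rC, one_div, Real.inv_rpow hmp.le]
  have hrB0 : (0 : ℝ) ≤ (rB m) ^ ((N : ℝ) / m) := Real.rpow_nonneg (rB_pos hm).le _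
  rw [h2, h3, h4, hrC]
  have hvol0 : (0 : ℝ) ≤ (volume (ball (0 : Eu N) 1)).toReal := ENNReal.toReal_nonneg
  have hscal : (N : ℝ) * ((m : ℝ) ^ (((1 : ℝ) / m - 1) * (N : ℝ)) *
        ((((m : ℝ) ^ ((N : ℝ) / m))⁻¹) / ((N : ℝ) / (m : ℝ))))
      = (m : ℝ) ^ ((1 : ℝ) - (N : ℝ)) := by
    rw [← Real.rpow_neg hmp.le ((N : ℝ) / m)]
    rw [show (1 : ℝ) - (N : ℝ) = ((1 : ℝ) / m - 1) * (N : ℝ) + (-((N : ℝ) / m)) + 1 by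
      field_simp; ring]
    rw [Real.rpow_add hmp, Real.rpow_add hmp, Real.rpow_one]
    field_simp
  have hconv : (m : ℝ) ^ ((1 : ℝ) - (N : ℝ)) = ((m : ℝ) ^ (N - 1))⁻¹ := by
    rw [← Real.rpow_natCast (m : ℝ) (N - 1), ← Real.rpow_neg hmp.le]
    congr 1
    rw [Nat.cast_sub (by omega : 1 ≤ N), Nat.cast_one]
    ring
  calc (N : ℝ) * ((volume (ball (0 : Eu N) 1)).toReal *
        ((m : ℝ) ^ (((1 : ℝ) / m - 1) * (N : ℝ)) *
          (((((m : ℝ) ^ ((N : ℝ) / m))⁻¹) - (rB m) ^ ((N : ℝ) / m)) / ((N : ℝ) / m))))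
      ≤ (N : ℝ) * ((volume (ball (0 : Eu N) 1)).toReal *
          ((m : ℝ) ^ (((1 : ℝ) / m - 1) * (N : ℝ)) *
            ((((m : ℝ) ^ ((N : ℝ) / m))⁻¹) / ((N : ℝ) / m)))) := by
        apply mul_le_mul_of_nonneg_left _ (Nat.cast_nonneg N)
        apply mul_le_mul_of_nonneg_left _ hvol0
        apply mul_le_mul_of_nonneg_left _ (Real.rpow_nonneg hmp.le _)
        exact div_le_div_of_nonneg_right (by linarith) hNm_pos.le
    _ = (volume (ball (0 : Eu N) 1)).toReal * ((N : ℝ) *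
          ((m : ℝ) ^ (((1 : ℝ) / m - 1) * (N : ℝ)) *
            ((((m : ℝ) ^ ((N : ℝ) / m))⁻¹) / ((N : ℝ) / m)))) := by ring
    _ = (volume (ball (0 : Eu N) 1)).toReal * ((m : ℝ) ^ (N - 1))⁻¹ := by
        rw [hscal, hconv]


set_option maxHeartbeats 1000000 in
theorem main (N : ℕ) (hN : 2 ≤ N) (M L : ℝ) (hM : 0 < M) (hL : 0 < L) :
    ∃ C > (0 : ℝ), ∀ m : ℕ, 1 ≤ m → ∀ u : Eu N → ℝ,
      (∃ K : NNReal, LipschitzWith K u) →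
      (∀ x, |u x| ≤ M) →
      (∀ᵐ x ∂(volume : Measure (Eu N)), ‖fderiv ℝ u x‖ ≤ L) →
      (Integrable fun x => ‖fderiv ℝ u x‖ ^ N) →
      |(∫ x, ‖fderiv ℝ (fun y => eta N m y * u y) x‖ ^ N) - ∫ x, ‖fderiv ℝ u x‖ ^ N|
        ≤ C / (m : ℝ) ^ (N - 1) := by
  classical
  haveI := nontrivial_Eu N hN
  set vol : ℝ := (volume (ball (0 : Eu N) 1)).toReal with hvol_def
  have hvolpos : 0 < vol :=
    ENNReal.toReal_pos (measure_ball_pos _ _ one_pos).ne' measure_ball_lt_top.ne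
  have hC0pos : 0 < vol * ((2*M+L)^N + 2^N * M^N + 2^N * L^N + L^N) := by
    apply mul_pos hvolpos
    have hLN : (0:ℝ) < L^N := pow_pos hL N
    have h1 : (0:ℝ) ≤ (2*M+L)^N := by positivity
    have h2 : (0:ℝ) ≤ 2^N * M^N := by positivity
    have h3 : (0:ℝ) ≤ 2^N * L^N := by positivity
    linarith
  refine ⟨_, hC0pos, ?_⟩
  intro m hm u hKu hMu hLu hEint
  obtain ⟨K, hK⟩ := hKu
  have hm1' : (1:ℝ) ≤ (m:ℝ) := hm1 hm
  have hmp : (0:ℝ) < (m:ℝ) := hmpos hm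
  have hqpos : (0:ℝ) < (m:ℝ)^(N-1) := hpow_pos hm _
  suffices key : ∀ DD EE : Eu N → ℝ,
      DD = (fun x => ‖fderiv ℝ (fun y => eta N m y * u y) x‖ ^ N) →
      EE = (fun x => ‖fderiv ℝ u x‖ ^ N) →
      |(∫ x, DD x) - ∫ x, EE x| ≤
        vol * ((2*M+L)^N + 2^N * M^N + 2^N * L^N + L^N) / (m : ℝ) ^ (N - 1) by
    simpa using key _ _ rfl rfl
  intro DD EE hDDf hEEf
  have hDDx : ∀ x, DD x = ‖fderiv ℝ (fun y => eta N m y * u y) x‖ ^ N := fun x => by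
    rw [hDDf]
  have hEEx : ∀ x, EE x = ‖fderiv ℝ u x‖ ^ N := fun x => by rw [hEEf]
  have hDD0 : ∀ x, 0 ≤ DD x := fun x => by rw [hDDx x]; positivity
  have hEE0 : ∀ x, 0 ≤ EE x := fun x => by rw [hEEx x]; positivity
  have hEEint : Integrable EE := by rw [hEEf]; exact hEint
  have hDDmeas : AEStronglyMeasurable DD volume := by
    rw [hDDf]
    exact (((measurable_fderiv ℝ _).norm).pow_const N).aestronglyMeasurable
  set cb2 := closedBall (0 : Eu N) (rB m) with hcb2_def
  set cb3 := closedBall (0 : Eu N) (rC m) with hcb3_def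
  have m2 : MeasurableSet cb2 := measurableSet_closedBall
  have m3 : MeasurableSet cb3 := measurableSet_closedBall
  have hsph : ∀ r : ℝ, ∀ᵐ x : Eu N, ‖x‖ ≠ r := by
    intro r
    have h0 : volume (sphere (0 : Eu N) r) = 0 := Measure.addHaar_sphere volume 0 r
    rw [ae_iff]
    convert h0 using 2
    ext x
    simp [not_not, mem_sphere_zero_iff_norm]
  have hdiffu : ∀ᵐ x : Eu N, DifferentiableAt ℝ u x := hK.ae_differentiableAt
  have hKKb : (0:ℝ) ≤ M * (2 * (m:ℝ)^m) + L :=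
    add_nonneg (mul_nonneg hM.le (by positivity)) hL.le
  set KK : ℝ := (M * (2 * (m:ℝ)^m) + L)^N with hKK_def
  have hKK0 : 0 ≤ KK := pow_nonneg hKKb N
  -- a.e. bound on all of cb3
  have hb3 : ∀ᵐ x : Eu N, x ∈ cb3 → DD x ≤ KK := by
    filter_upwards [hdiffu, hLu, hsph (rA m), hsph (rB m), hsph (rC m)]
      with x hux hLx hneA hneB hneC hxmem
    have hx3 : ‖x‖ < rC m := lt_of_le_of_ne (mem_closedBall_zero_iff.1 hxmem) hneC
    rcases lt_or_ge ‖x‖ (rA m) with h | h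
    · rw [hDDx x, fderiv_inner hm h, norm_zero, zero_pow (by omega : N ≠ 0)]
      exact hKK0
    · have h1 : rA m < ‖x‖ := lt_of_le_of_ne h (Ne.symm hneA)
      rcases lt_or_ge ‖x‖ (rB m) with h2 | h2'
      · obtain ⟨hdiff, hbnd⟩ := eta_fderiv_bound_lin hm h1 h2
        have hb := fderiv_mul_bound hm hux hMu hdiff hbnd
        rw [hDDx x, hKK_def]
        apply pow_le_pow_left₀ (norm_nonneg _) _ N
        linarith
      · have h2 : rB m < ‖x‖ := lt_of_le_of_ne h2' (Ne.symm hneB)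
        obtain ⟨hdiff, hbnd⟩ := eta_fderiv_bound_rpow hm h2 hx3
        have hbnd' : ‖fderiv ℝ (eta N m) x‖ ≤ 2 * (m:ℝ)^m := by
          refine le_trans (le_trans hbnd (rpow_slope_le hm h2)) ?_
          nlinarith [hpow_pos hm m]
        have hb := fderiv_mul_bound hm hux hMu hdiff hbnd'
        rw [hDDx x, hKK_def]
        apply pow_le_pow_left₀ (norm_nonneg _) _ N
        linarith
  -- fine a.e. bound on the annulus
  have hbann : ∀ᵐ x : Eu N, x ∈ cb3 \ cb2 →
      DD x ≤ 2^N * M^N * (((m:ℝ) * ‖x‖) ^ ((1:ℝ)/m - 1))^N + 2^N * L^N := by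
    filter_upwards [hdiffu, hLu, hsph (rC m)] with x hux hLx hneC hxmem
    obtain ⟨hx3', hx2⟩ := hxmem
    have h2 : rB m < ‖x‖ := not_le.1 (fun hc => hx2 (mem_closedBall_zero_iff.2 hc))
    have hx3 : ‖x‖ < rC m := lt_of_le_of_ne (mem_closedBall_zero_iff.1 hx3') hneC
    obtain ⟨hdiff, hbnd⟩ := eta_fderiv_bound_rpow hm h2 hx3
    have hb := fderiv_mul_bound hm hux hMu hdiff hbnd
    have hc0 : (0:ℝ) ≤ ((m:ℝ)*‖x‖) ^ ((1:ℝ)/m - 1) := Real.rpow_nonneg (by positivity) _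
    rw [hDDx x]
    calc ‖fderiv ℝ (fun y => eta N m y * u y) x‖ ^ N
        ≤ (M * ((m:ℝ)*‖x‖) ^ ((1:ℝ)/m - 1) + L)^N := by
          apply pow_le_pow_left₀ (norm_nonneg _) _ N
          linarith
      _ ≤ 2^N * ((M * ((m:ℝ)*‖x‖) ^ ((1:ℝ)/m - 1))^N + L^N) :=
          pow_add_le_aux _ _ (mul_nonneg hM.le hc0) hL.le N
      _ = 2^N * M^N * (((m:ℝ)*‖x‖) ^ ((1:ℝ)/m - 1))^N + 2^N * L^N := by
          rw [mul_pow M]; ring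
  -- integrability of DD
  have hIndInt : Integrable (fun x : Eu N => Set.indicator cb3 (fun _ => KK) x + EE x) := by
    refine Integrable.add ?_ hEEint
    exact (integrableOn_const measure_closedBall_lt_top.ne).integrable_indicator m3
  have hDDint : Integrable DD := by
    refine hIndInt.mono' hDDmeas ?_
    filter_upwards [hb3] with x hx
    rw [Real.norm_eq_abs, abs_of_nonneg (hDD0 x)]
    by_cases hmem : x ∈ cb3
    · rw [Set.indicator_of_mem hmem]
      have h1 := hx hmem
      have h2 := hEE0 x
      linarith
    · rw [Set.indicator_of_notMem hmem]
      have hgt : rC m < ‖x‖ := not_le.1 (fun hc => hmem (mem_closedBall_zero_iff.2 hc))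
      have heq : DD x = EE x := by rw [hDDx x, hEEx x, fderiv_outer hm hgt]
      rw [heq, zero_add]
  -- splitting off the complement of cb3
  have houter_eq : ∀ x ∈ cb3ᶜ, DD x = EE x := by
    intro x hx
    have hgt : rC m < ‖x‖ := not_le.1 (fun hc => hx (mem_closedBall_zero_iff.2 hc))
    rw [hDDx x, hEEx x, fderiv_outer hm hgt]
  have hsplit : (∫ x, DD x) - (∫ x, EE x) = (∫ x in cb3, DD x) - ∫ x in cb3, EE x := by
    have h1 := integral_add_compl m3 hDDint
    have h2 := integral_add_compl m3 hEEint
    have h3 : ∫ x in cb3ᶜ, DD x = ∫ x in cb3ᶜ, EE x :=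
      setIntegral_congr_fun m3.compl houter_eq
    linarith
  have hsub : cb2 ⊆ cb3 := closedBall_subset_closedBall (rB_le_rC hm)
  have hunion : ∫ x in cb3, DD x = (∫ x in cb2, DD x) + ∫ x in cb3 \ cb2, DD x := by
    have h := setIntegral_union (f := DD) (μ := volume) disjoint_sdiff_self_right
      (m3.diff m2) hDDint.integrableOn hDDint.integrableOn
    rw [Set.union_diff_cancel hsub] at h
    exact h
  have hvol2 : (volume cb2).toReal = rB m ^ N * vol := cb_vol N (rB_pos hm).le
  have hvol3 : (volume cb3).toReal = rC m ^ N * vol := cb_vol N (rC_pos hm).le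
  have h_cb2 : ∫ x in cb2, DD x ≤ KK * (rB m ^ N * vol) := by
    have hb2' : ∀ᵐ x : Eu N, x ∈ cb2 → DD x ≤ KK := by
      filter_upwards [hb3] with x hx hxm
      exact hx (hsub hxm)
    have h1 : ∫ x in cb2, DD x ≤ ∫ _x in cb2, KK :=
      setIntegral_mono_on_ae hDDint.integrableOn
        (integrableOn_const measure_closedBall_lt_top.ne) m2 hb2'
    rw [setIntegral_const, smul_eq_mul, measureReal_def, hvol2] at h1
    exact h1.trans (le_of_eq (mul_comm _ _))
  have hannmeas : MeasurableSet (cb3 \ cb2) := m3.diff m2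
  have hannfin : volume (cb3 \ cb2) ≠ ⊤ :=
    ((measure_mono Set.diff_subset).trans_lt measure_closedBall_lt_top).ne
  have hpowint : IntegrableOn
      (fun x : Eu N => (((m:ℝ) * ‖x‖) ^ ((1:ℝ)/m - 1))^N) (cb3 \ cb2) volume := by
    apply Measure.integrableOn_of_bounded hannfin
    · apply Measurable.aestronglyMeasurable
      fun_prop
    · filter_upwards [ae_restrict_mem hannmeas] with x hx
      have h2 : rB m < ‖x‖ := not_le.1 (fun hc => hx.2 (mem_closedBall_zero_iff.2 hc))
      rw [Real.norm_eq_abs, abs_of_nonneg (pow_nonneg (Real.rpow_nonneg (by positivity) _) N)]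
      exact pow_le_pow_left₀ (Real.rpow_nonneg (by positivity) _) (rpow_slope_le hm h2) N
  have hgint : IntegrableOn
      (fun x : Eu N => 2^N * M^N * (((m:ℝ) * ‖x‖) ^ ((1:ℝ)/m - 1))^N + 2^N * L^N)
      (cb3 \ cb2) volume :=
    (hpowint.const_mul _).add (integrableOn_const hannfin)
  have h_ann1 : ∫ x in cb3 \ cb2, DD x
      ≤ ∫ x in cb3 \ cb2,
          (2^N * M^N * (((m:ℝ) * ‖x‖) ^ ((1:ℝ)/m - 1))^N + 2^N * L^N) :=
    setIntegral_mono_on_ae hDDint.integrableOn hgint hannmeas hbann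
  have h_ann2 : ∫ x in cb3 \ cb2,
        (2^N * M^N * (((m:ℝ) * ‖x‖) ^ ((1:ℝ)/m - 1))^N + 2^N * L^N)
      = 2^N * M^N * (∫ x in cb3 \ cb2, (((m:ℝ) * ‖x‖) ^ ((1:ℝ)/m - 1))^N)
        + 2^N * L^N * (volume (cb3 \ cb2)).toReal := by
    rw [integral_add (hpowint.const_mul _) (integrableOn_const hannfin),
      integral_const_mul, setIntegral_const, smul_eq_mul, measureReal_def]
    ring
  have hJ := annulus_J_le N hN m hm
  rw [← hvol_def] at hJ
  have h_ann3 : 2^N * M^N * (∫ x in cb3 \ cb2, (((m:ℝ) * ‖x‖) ^ ((1:ℝ)/m - 1))^N)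
      ≤ 2^N * M^N * (vol * ((m:ℝ)^(N-1))⁻¹) :=
    mul_le_mul_of_nonneg_left hJ (by positivity)
  have h_annvol : (volume (cb3 \ cb2)).toReal ≤ rC m ^ N * vol := by
    rw [← hvol3]
    exact ENNReal.toReal_mono measure_closedBall_lt_top.ne (measure_mono Set.diff_subset)
  have h_cb3EE : ∫ x in cb3, EE x ≤ L^N * (rC m ^ N * vol) := by
    have hEb : ∀ᵐ x : Eu N, x ∈ cb3 → EE x ≤ L^N := by
      filter_upwards [hLu] with x hx _
      rw [hEEx x]
      exact pow_le_pow_left₀ (norm_nonneg _) hx N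
    have h1 : ∫ x in cb3, EE x ≤ ∫ _x in cb3, L^N :=
      setIntegral_mono_on_ae hEEint.integrableOn
        (integrableOn_const measure_closedBall_lt_top.ne) m3 hEb
    rw [setIntegral_const, smul_eq_mul, measureReal_def, hvol3] at h1
    exact h1.trans (le_of_eq (mul_comm _ _))
  have h0D3 : 0 ≤ ∫ x in cb3, DD x := setIntegral_nonneg m3 (fun x _ => hDD0 x)
  have h0E3 : 0 ≤ ∫ x in cb3, EE x := setIntegral_nonneg m3 (fun x _ => hEE0 x)
  have habs : |(∫ x, DD x) - ∫ x, EE x| ≤ (∫ x in cb3, DD x) + ∫ x in cb3, EE x := by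
    rw [hsplit, abs_le]
    constructor <;> linarith
  have hq1 : rC m ^ N ≤ ((m:ℝ)^(N-1))⁻¹ := by
    rw [rC, one_div, inv_pow]
    exact inv_anti₀ (hpow_pos hm (N-1)) (pow_le_pow_right₀ hm1' (by omega))
  have hT1 : KK * (rB m ^ N * vol) ≤ (2*M+L)^N * (vol * ((m:ℝ)^(N-1))⁻¹) := by
    have hbase : (M * (2*(m:ℝ)^m) + L) * rB m ≤ (2*M+L) * rC m := by
      rw [rB, rC, mul_one_div, mul_one_div, div_le_div_iff₀ (hpow_pos hm _) hmp]
      have hps : (m:ℝ)^(m+1) = (m:ℝ)^m * m := pow_succ _ _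
      have h1m : (1:ℝ) ≤ (m:ℝ)^m := one_le_pow₀ hm1'
      have h2 : L * (m:ℝ) ≤ L * ((m:ℝ)^m * (m:ℝ)) :=
        mul_le_mul_of_nonneg_left (le_mul_of_one_le_left hmp.le h1m) hL.le
      calc (M * (2*(m:ℝ)^m) + L) * m = 2*M*((m:ℝ)^m * m) + L*m := by ring
        _ ≤ 2*M*((m:ℝ)^m * m) + L*((m:ℝ)^m * m) := by linarith
        _ = (2*M+L) * (m:ℝ)^(m+1) := by rw [hps]; ring
    have h0 : (0:ℝ) ≤ (M * (2*(m:ℝ)^m) + L) * rB m := mul_nonneg hKKb (rB_pos hm).le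
    calc KK * (rB m ^ N * vol) = ((M * (2*(m:ℝ)^m) + L) * rB m)^N * vol := by
          rw [hKK_def, mul_pow]; ring
      _ ≤ ((2*M+L) * rC m)^N * vol := by
          apply mul_le_mul_of_nonneg_right _ hvolpos.le
          exact pow_le_pow_left₀ h0 hbase N
      _ = (2*M+L)^N * (rC m ^ N * vol) := by rw [mul_pow]; ring
      _ ≤ (2*M+L)^N * (((m:ℝ)^(N-1))⁻¹ * vol) := by
          apply mul_le_mul_of_nonneg_left _ (by positivity)
          exact mul_le_mul_of_nonneg_right hq1 hvolpos.le
      _ = (2*M+L)^N * (vol * ((m:ℝ)^(N-1))⁻¹) := by ring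
  have hT3 : 2^N * L^N * (volume (cb3 \ cb2)).toReal
      ≤ 2^N * L^N * (vol * ((m:ℝ)^(N-1))⁻¹) := by
    apply mul_le_mul_of_nonneg_left _ (by positivity)
    calc (volume (cb3 \ cb2)).toReal ≤ rC m ^ N * vol := h_annvol
      _ ≤ ((m:ℝ)^(N-1))⁻¹ * vol := mul_le_mul_of_nonneg_right hq1 hvolpos.le
      _ = vol * ((m:ℝ)^(N-1))⁻¹ := mul_comm _ _
  have hT4 : L^N * (rC m ^ N * vol) ≤ L^N * (vol * ((m:ℝ)^(N-1))⁻¹) := by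
    apply mul_le_mul_of_nonneg_left _ (by positivity)
    calc rC m ^ N * vol ≤ ((m:ℝ)^(N-1))⁻¹ * vol := mul_le_mul_of_nonneg_right hq1 hvolpos.le
      _ = vol * ((m:ℝ)^(N-1))⁻¹ := mul_comm _ _
  have hfinal : |(∫ x, DD x) - ∫ x, EE x|
      ≤ ((2*M+L)^N + 2^N * M^N + 2^N * L^N + L^N) * (vol * ((m:ℝ)^(N-1))⁻¹) := by
    linarith [habs, hunion, h_cb2, h_ann1, h_ann2, h_ann3, hT1, hT3, hT4, h_cb3EE]
  calc |(∫ x, DD x) - ∫ x, EE x|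
      ≤ ((2*M+L)^N + 2^N * M^N + 2^N * L^N + L^N) * (vol * ((m:ℝ)^(N-1))⁻¹) := hfinal
    _ = vol * ((2*M+L)^N + 2^N * M^N + 2^N * L^N + L^N) / (m:ℝ)^(N-1) := by
        rw [div_eq_mul_inv]; ring

end

end EtaAux

theorem stmt_15 (N : ℕ) (hN : 2 ≤ N) (M L : ℝ) (hM : 0 < M) (hL : 0 < L) :
    ∃ C > (0 : ℝ), ∀ m : ℕ, 1 ≤ m → ∀ u : EuclideanSpace ℝ (Fin N) → ℝ,
      (∃ K : NNReal, LipschitzWith K u) →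
      (∀ x, |u x| ≤ M) →
      (∀ᵐ x ∂(volume : Measure (EuclideanSpace ℝ (Fin N))), ‖fderiv ℝ u x‖ ≤ L) →
      (Integrable fun x => ‖fderiv ℝ u x‖ ^ N) →
      |(∫ x, ‖fderiv ℝ (fun y => eta N m y * u y) x‖ ^ N) - ∫ x, ‖fderiv ℝ u x‖ ^ N|
        ≤ C / (m : ℝ) ^ (N - 1) :=
  EtaAux.main N hN M L hM hL
end
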